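/- Let H ≤ G be finite groups and let a ∈ kG be H-invariant under conjugation (ha = ah for all h ∈ H). Then p_H(ga) = p_H(ag) for all g ∈ G, where p_H : kG → kH is the projection sending g ↦ g for g ∈ H and g ↦ 0 otherwise. -/

import Mathlib

open MonoidAlgebra Classical

variable {k : Type} [CommRing k] {G : Type} [Group G] [Fintype G]

/-- The projection `p_H : kG → kG` (with image `kH ⊆ kG`) sending `g ↦ g` for
`g ∈ H` and `g ↦ 0` otherwise, extended `k`-linearly. -/
noncomputable def pHG (k : Type) [CommRing k] {G : Type} [Group G] (H : Subgroup G) :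
    MonoidAlgebra k G →ₗ[k] MonoidAlgebra k G where
  toFun f := MonoidAlgebra.ofCoeff (f.coeff.filter (· ∈ H))
  map_add' f g := congrArg MonoidAlgebra.ofCoeff Finsupp.filter_add
  map_smul' c f := congrArg MonoidAlgebra.ofCoeff Finsupp.filter_smul

omit [Fintype G] in
theorem coeff_pHG (H : Subgroup G) (f : MonoidAlgebra k G) (x : G) :
    (pHG k H f).coeff x = if x ∈ H then f.coeff x else 0 :=
  Finsupp.filter_apply ..

namespace MonoidAlgebra

variable {R M : Type*} [Semiring R] [Group M] {a : MonoidAlgebra R M} {h : M}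

theorem coeff_inv_mul_eq_coeff_mul_inv_of_commute (hc : Commute (of R M h) a) (y : M) :
    a.coeff (h⁻¹ * y) = a.coeff (y * h⁻¹) := by
  simpa using congrArg (·.coeff y) hc.eq

/-- The two coefficients are `a (g⁻¹ h)` and `a (h g⁻¹)`, and conjugation by `h`, which fixes
`a`, carries `g⁻¹ h` to `h g⁻¹`. -/
theorem coeff_of_mul_eq_coeff_mul_of_of_commute (hc : Commute (of R M h) a) (g : M) :
    (of R M g * a).coeff h = (a * of R M g).coeff h := by
  simpa [mul_assoc] using coeff_inv_mul_eq_coeff_mul_inv_of_commute hc (h * g⁻¹ * h)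

end MonoidAlgebra

/-- If `a ∈ kG` is `H`-invariant under conjugation
(`h a = a h` for all `h ∈ H`), then `p_H(g a) = p_H(a g)` for all `g ∈ G`. -/
theorem pH_conj_invariant (H : Subgroup G) (a : MonoidAlgebra k G)
    (ha : ∀ h : G, h ∈ H →
      MonoidAlgebra.of k G h * a = a * MonoidAlgebra.of k G h) (g : G) :
    pHG k H (MonoidAlgebra.of k G g * a) = pHG k H (a * MonoidAlgebra.of k G g) := by
  ext x
  simp only [coeff_pHG]
  split_ifs with hx
  · exact coeff_of_mul_eq_coeff_mul_of_of_commute (ha x hx) g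
  · rfl
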